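/- Fix N ≥ 1 and integers n, r, m, d with 0 ≤ m ≤ r ≤ n and −m ≤ d ≤ r − m, and set k := d + m. Consider the family of operators B_{I,J}[f] := x^I · ( (n−|J| − E)_k [ D_J f ] ) indexed by pairs of multi-indices (I, J) with |I| = r − m and |J| = r − d − m. Then: (1) this family is ℝ-linearly independent as linear maps on ℝ[x_1,…,x_N]; (2) each B_{I,J} has order r, maps every monomial x^K into the span of the monomials of total degree |K| + d, and maps P_n^N into P_{n−m}^N but not into P_{n−m−1}^N. Consequently, the span of this family has dimension C(N+r−m−1, r−m)·C(N+r−m−d−1, r−m−d). -/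

import Mathlib

open MvPolynomial

/-- The weight `|J| = j_1 + ⋯ + j_N` of a multi-index. -/
def mwt {N : ℕ} (J : Fin N → ℕ) : ℕ := ∑ i, J i

/-- The monomial `x^I = x_1^{i_1} ⋯ x_N^{i_N}`. -/
noncomputable def xPow {N : ℕ} (I : Fin N → ℕ) : MvPolynomial (Fin N) ℝ :=
  ∏ i, (X i : MvPolynomial (Fin N) ℝ) ^ I i

/-- The differential operator `D_J = ∂_{x_1}^{j_1} ⋯ ∂_{x_N}^{j_N}`. -/
noncomputable def DJ {N : ℕ} (J : Fin N → ℕ) :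
    MvPolynomial (Fin N) ℝ →ₗ[ℝ] MvPolynomial (Fin N) ℝ :=
  (((List.finRange N).map fun i =>
    (((pderiv i : Derivation ℝ (MvPolynomial (Fin N) ℝ) (MvPolynomial (Fin N) ℝ)).toLinearMap :
      Module.End ℝ (MvPolynomial (Fin N) ℝ)) ^ (J i))).prod)

/-- The Euler operator `E = ∑ x_i ∂_{x_i}`. -/
noncomputable def Euler (N : ℕ) : MvPolynomial (Fin N) ℝ →ₗ[ℝ] MvPolynomial (Fin N) ℝ :=
  ∑ i : Fin N, (LinearMap.mulLeft ℝ (X i : MvPolynomial (Fin N) ℝ)).comp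
    (pderiv i : Derivation ℝ (MvPolynomial (Fin N) ℝ) (MvPolynomial (Fin N) ℝ)).toLinearMap

/-- The Pochhammer operator `(a − E)_k = (a − E)∘((a−1) − E)∘⋯∘((a−k+1) − E)`,
the identity when `k = 0`. -/
noncomputable def pochE (N : ℕ) (a : ℤ) :
    ℕ → (MvPolynomial (Fin N) ℝ →ₗ[ℝ] MvPolynomial (Fin N) ℝ)
  | 0 => LinearMap.id
  | k + 1 => ((a : ℝ) • (LinearMap.id : MvPolynomial (Fin N) ℝ →ₗ[ℝ] MvPolynomial (Fin N) ℝ)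
      - Euler N).comp (pochE N (a - 1) k)

/-- The finite set of multi-indices `J ∈ ℕ^N` with `|J| ≤ r`. -/
def multiIdx (N r : ℕ) : Finset (Fin N → ℕ) :=
  (Fintype.piFinset fun _ : Fin N => Finset.range (r + 1)).filter fun I => ∑ i, I i ≤ r

/-- The operator `B_{I,J}[f] = x^I·(n−|J|−E)_k [D_J f]`, with `k = d+m`. -/
noncomputable def Bop (N n : ℕ) (k : ℕ) (I J : Fin N → ℕ) :
    MvPolynomial (Fin N) ℝ →ₗ[ℝ] MvPolynomial (Fin N) ℝ :=
  (LinearMap.mulLeft ℝ (xPow I)).comp ((pochE N ((n : ℤ) - mwt J) k).comp (DJ J))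

namespace Stmt10
variable {N : ℕ}

noncomputable def toF {N : ℕ} (I : Fin N → ℕ) : Fin N →₀ ℕ := Finsupp.equivFunOnFinite.symm I

def swt {N : ℕ} (s : Fin N →₀ ℕ) : ℕ := ∑ i, s i

@[simp] lemma toF_apply (I : Fin N → ℕ) (i : Fin N) : toF I i = I i := rfl

@[simp] lemma swt_toF (I : Fin N → ℕ) : swt (toF I) = mwt I := rfl

lemma toF_injective : Function.Injective (toF (N := N)) :=
  Finsupp.equivFunOnFinite.symm.injective

lemma mem_multiIdx {K : Fin N → ℕ} {r : ℕ} : K ∈ multiIdx N r ↔ mwt K ≤ r := by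
  constructor
  · rintro h; exact (Finset.mem_filter.mp h).2
  · intro h
    refine Finset.mem_filter.mpr ⟨Fintype.mem_piFinset.mpr fun i => ?_, h⟩
    have : K i ≤ mwt K := Finset.single_le_sum (f := K) (fun _ _ => Nat.zero_le _) (Finset.mem_univ i)
    exact Finset.mem_range.mpr (by omega)

lemma xPow_eq_monomial (I : Fin N → ℕ) : xPow I = monomial (toF I) 1 := by
  rw [xPow, monomial_eq, C_1, one_mul, Finsupp.prod_fintype]
  · rfl
  · intro i; exact pow_zero _


noncomputable def pdE (i : Fin N) : Module.End ℝ (MvPolynomial (Fin N) ℝ) :=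
  ((pderiv i : Derivation ℝ (MvPolynomial (Fin N) ℝ) (MvPolynomial (Fin N) ℝ)).toLinearMap :
      Module.End ℝ (MvPolynomial (Fin N) ℝ))

@[simp] lemma pdE_apply (i : Fin N) (f : MvPolynomial (Fin N) ℝ) : pdE i f = pderiv i f := rfl

lemma descFactorial_succ' (n q : ℕ) :
    n.descFactorial (q + 1) = n * (n - 1).descFactorial q := by
  cases n with
  | zero => simp
  | succ n => rw [Nat.succ_descFactorial_succ]; simp

lemma pdE_pow_monomial (i : Fin N) (q : ℕ) (s : Fin N →₀ ℕ) (c : ℝ) :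
    ((pdE i) ^ q) (monomial s c)
      = monomial (s - Finsupp.single i q) (c * (s i).descFactorial q) := by
  induction q generalizing s c with
  | zero => simp
  | succ q ih =>
    rw [pow_succ, Module.End.mul_apply, pdE_apply, pderiv_monomial, ih]
    rw [tsub_tsub, ← Finsupp.single_add, add_comm 1 q]
    have h1 : (s - Finsupp.single i 1 : Fin N →₀ ℕ) i = s i - 1 := by simp
    rw [h1, descFactorial_succ']
    push_cast
    ring_nf

lemma Dlist_monomial (l : List (Fin N)) (hl : l.Nodup) (J : Fin N → ℕ) (s : Fin N →₀ ℕ) (c : ℝ) :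
    ((l.map fun i => (pdE i) ^ (J i)).prod) (monomial s c)
      = monomial (s - ∑ i ∈ l.toFinset, Finsupp.single i (J i))
          (c * ∏ i ∈ l.toFinset, ((s i).descFactorial (J i) : ℝ)) := by
  induction l with
  | nil => simp
  | cons i l ih =>
    have hi : i ∉ l := (List.nodup_cons.mp hl).1
    have hl' : l.Nodup := (List.nodup_cons.mp hl).2
    rw [List.map_cons, List.prod_cons, Module.End.mul_apply, ih hl', pdE_pow_monomial]
    have hni : i ∉ l.toFinset := by simpa using hi
    have hzero : (∑ j ∈ l.toFinset, Finsupp.single j (J j)) i = 0 := by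
      rw [Finsupp.finset_sum_apply]
      exact Finset.sum_eq_zero fun j hj => by
        rw [Finsupp.single_apply, if_neg]; rintro rfl; exact hni hj
    have happ : (s - ∑ j ∈ l.toFinset, Finsupp.single j (J j)) i = s i := by
      rw [Finsupp.tsub_apply, hzero]; rfl
    rw [happ, List.toFinset_cons, Finset.sum_insert hni, Finset.prod_insert hni, tsub_tsub,
      add_comm (Finsupp.single i (J i))]
    ring_nf

lemma DJ_monomial (J : Fin N → ℕ) (s : Fin N →₀ ℕ) (c : ℝ) :
    DJ J (monomial s c)
      = monomial (s - toF J) (c * ∏ i, ((s i).descFactorial (J i) : ℝ)) := by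
  have h := Dlist_monomial (List.finRange N) (List.nodup_finRange N) J s c
  have h2 : (List.finRange N).toFinset = (Finset.univ : Finset (Fin N)) := by
    ext i; simp
  rw [h2] at h
  have h3 : (∑ i : Fin N, Finsupp.single i (J i)) = toF J := by
    ext x
    rw [Finsupp.finset_sum_apply]
    rw [Finset.sum_eq_single x (fun j _ hj => by rw [Finsupp.single_apply, if_neg hj])
      (fun h => absurd (Finset.mem_univ x) h)]
    simp
  rw [DJ, ← h3]
  exact h

lemma Euler_apply (f : MvPolynomial (Fin N) ℝ) :
    Euler N f = ∑ i : Fin N, (X i : MvPolynomial (Fin N) ℝ) * pderiv i f := by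
  rw [Euler, LinearMap.sum_apply]; rfl

lemma Euler_monomial (s : Fin N →₀ ℕ) (c : ℝ) :
    Euler N (monomial s c) = (swt s : ℝ) • monomial s c := by
  rw [Euler_apply]
  have : ∀ i : Fin N, (X i : MvPolynomial (Fin N) ℝ) * pderiv i (monomial s c)
      = (s i : ℝ) • monomial s c := by
    intro i
    rw [pderiv_monomial, X, monomial_mul, one_mul]
    by_cases h : s i = 0
    · simp [h]
    · rw [add_comm, tsub_add_cancel_of_le (Finsupp.single_le_iff.mpr (by omega)), smul_monomial,
        smul_eq_mul, mul_comm]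
  rw [Finset.sum_congr rfl fun i _ => this i, ← Finset.sum_smul, swt, Nat.cast_sum]

lemma pochE_monomial (a : ℤ) (k : ℕ) (s : Fin N →₀ ℕ) (c : ℝ) :
    pochE N a k (monomial s c)
      = (∏ t ∈ Finset.range k, ((a : ℝ) - t - swt s)) • monomial s c := by
  induction k generalizing a with
  | zero => simp [pochE]
  | succ k ih =>
    rw [pochE, LinearMap.comp_apply, ih, map_smul, LinearMap.sub_apply, Euler_monomial,
      LinearMap.smul_apply, LinearMap.id_apply, Finset.prod_range_succ']
    push_cast
    rw [← sub_smul, smul_smul]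
    have hp : (∏ x ∈ Finset.range k, ((a:ℝ) - 1 - x - swt s))
        = ∏ x ∈ Finset.range k, ((a:ℝ) - (x+1) - swt s) :=
      Finset.prod_congr rfl fun x _ => by ring
    rw [hp]
    ring_nf


lemma swt_sub {J : Fin N → ℕ} {s : Fin N →₀ ℕ} (h : toF J ≤ s) :
    swt (s - toF J) = swt s - mwt J := by
  rw [swt, swt, mwt, ← Finset.sum_tsub_distrib]
  · exact Finset.sum_congr rfl fun i _ => by rw [Finsupp.tsub_apply]; rfl
  · exact fun i _ => Finsupp.le_def.mp h i

lemma mwt_le_swt {J : Fin N → ℕ} {s : Fin N →₀ ℕ} (h : toF J ≤ s) : mwt J ≤ swt s :=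
  Finset.sum_le_sum fun i _ => Finsupp.le_def.mp h i

lemma Bop_apply (n k : ℕ) (I J : Fin N → ℕ) (f : MvPolynomial (Fin N) ℝ) :
    Bop N n k I J f = xPow I * pochE N ((n : ℤ) - mwt J) k (DJ J f) := rfl

lemma Bop_monomial_le (n k : ℕ) (I J : Fin N → ℕ) (s : Fin N →₀ ℕ) (c : ℝ)
    (h : toF J ≤ s) :
    Bop N n k I J (monomial s c)
      = monomial (toF I + (s - toF J))
          (c * (∏ i, ((s i).descFactorial (J i) : ℝ)) *
            ∏ t ∈ Finset.range k, ((n : ℝ) - t - swt s)) := by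
  rw [Bop_apply, DJ_monomial, pochE_monomial, xPow_eq_monomial, mul_smul_comm, monomial_mul,
    one_mul, smul_monomial, swt_sub h]
  have hle := mwt_le_swt h
  have : ∀ t : ℕ, (((n : ℤ) - mwt J : ℤ) : ℝ) - t - ((swt s - mwt J : ℕ) : ℝ)
      = (n : ℝ) - t - swt s := by
    intro t
    push_cast [Nat.cast_sub hle]
    ring
  rw [Finset.prod_congr rfl fun t _ => this t, smul_eq_mul]
  congr 1
  ring

lemma Bop_monomial_not_le (n k : ℕ) (I J : Fin N → ℕ) (s : Fin N →₀ ℕ) (c : ℝ)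
    (h : ¬ toF J ≤ s) :
    Bop N n k I J (monomial s c) = 0 := by
  obtain ⟨i, hi⟩ : ∃ i, s i < J i := by
    by_contra hc
    push_neg at hc
    exact h (Finsupp.le_def.mpr fun i => hc i)
  have hdf : ((s i).descFactorial (J i) : ℝ) = 0 := by
    rw [Nat.descFactorial_eq_zero_iff_lt.mpr hi, Nat.cast_zero]
  rw [Bop_apply, DJ_monomial]
  rw [Finset.prod_eq_zero (Finset.mem_univ i) hdf, mul_zero, monomial_zero, map_zero, mul_zero]


lemma toF_add_single (K : Fin N → ℕ) (i : Fin N) (q : ℕ) :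
    toF (K + Pi.single i q) = toF K + Finsupp.single i q := by
  ext x
  simp only [toF_apply, Pi.add_apply, Finsupp.add_apply, Finsupp.single_apply, Pi.single_apply]
  rcases eq_or_ne x i with rfl | hx
  · simp
  · simp [hx, (Ne.symm hx)]

lemma descF_prod_succ (K : Fin N → ℕ) (i : Fin N) (s : Fin N →₀ ℕ) :
    (∏ j, (s j).descFactorial ((K + Pi.single i 1 : Fin N → ℕ) j))
      = (s i - K i) * ∏ j, (s j).descFactorial (K j) := by
  have h1 : (fun j => (s j).descFactorial ((K + Pi.single i 1 : Fin N → ℕ) j))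
      = Function.update (fun j => (s j).descFactorial (K j)) i
          ((s i).descFactorial (K i + 1)) := by
    ext j
    rcases eq_or_ne j i with rfl | hj
    · simp
    · simp [Function.update_of_ne hj, Pi.single_apply, hj]
  rw [h1, Finset.prod_update_of_mem (Finset.mem_univ i), Nat.descFactorial_succ,
    ← Finset.mul_prod_erase Finset.univ _ (Finset.mem_univ i), Finset.erase_eq]
  ring

lemma pderiv_DJ (i : Fin N) (K : Fin N → ℕ) (f : MvPolynomial (Fin N) ℝ) :
    pderiv i (DJ K f) = DJ (K + Pi.single i 1) f := by
  induction f using MvPolynomial.induction_on' with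
  | add p q hp hq => simp only [map_add, hp, hq]
  | monomial s c =>
    rw [DJ_monomial, DJ_monomial, pderiv_monomial, toF_add_single, ← tsub_tsub]
    congr 1
    have h1 : (s - toF K : Fin N →₀ ℕ) i = s i - K i := by
      rw [Finsupp.tsub_apply]; rfl
    rw [h1, ← Nat.cast_prod, ← Nat.cast_prod, descF_prod_succ]
    push_cast
    ring

lemma Euler_DJ (K : Fin N → ℕ) (f : MvPolynomial (Fin N) ℝ) :
    Euler N (DJ K f) = ∑ i : Fin N, (X i : MvPolynomial (Fin N) ℝ) * DJ (K + Pi.single i 1) f := by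
  rw [Euler_apply]
  exact Finset.sum_congr rfl fun i _ => by rw [pderiv_DJ]

lemma Euler_mul (p q : MvPolynomial (Fin N) ℝ) :
    Euler N (p * q) = Euler N p * q + p * Euler N q := by
  rw [Euler_apply, Euler_apply, Euler_apply]
  rw [Finset.sum_mul, Finset.mul_sum, ← Finset.sum_add_distrib]
  refine Finset.sum_congr rfl fun i _ => ?_
  rw [pderiv_mul]
  ring


lemma mwt_add (K L : Fin N → ℕ) : mwt (K + L) = mwt K + mwt L := by
  simp [mwt, Finset.sum_add_distrib]

lemma mwt_single (i : Fin N) (q : ℕ) : mwt (Pi.single i q) = q := by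
  simp [mwt]

lemma mwt_sub {J K : Fin N → ℕ} (h : J ≤ K) : mwt (K - J) = mwt K - mwt J := by
  rw [mwt, mwt, mwt, ← Finset.sum_tsub_distrib]
  · rfl
  · exact fun i _ => h i

lemma X_mul_xPow (i : Fin N) (L : Fin N → ℕ) :
    (X i : MvPolynomial (Fin N) ℝ) * xPow L = xPow (L + Pi.single i 1) := by
  rw [xPow_eq_monomial, xPow_eq_monomial, X, monomial_mul, one_mul, toF_add_single]
  rw [add_comm]

lemma xPow_ne_zero (L : Fin N → ℕ) : xPow L ≠ 0 := by
  rw [xPow_eq_monomial]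
  intro h
  have := (monomial_eq_zero (s := toF L) (b := (1:ℝ))).mp h
  simp at this

lemma multiIdx_mono {r r' : ℕ} (h : r ≤ r') : multiIdx N r ⊆ multiIdx N r' := by
  intro K hK
  exact mem_multiIdx.mpr (le_trans (mem_multiIdx.mp hK) h)


lemma rep (i0 : Fin N) (J : Fin N → ℕ) (k : ℕ) :
    ∀ a : ℤ, ∃ b : (Fin N → ℕ) → MvPolynomial (Fin N) ℝ,
      (∀ f, pochE N a k (DJ J f) = ∑ K ∈ multiIdx N (mwt J + k), b K * DJ K f) ∧
      (∀ K, mwt K = mwt J + k →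
        (J ≤ K ∧ ∃ c : ℝ, 0 ≤ c ∧ b K = (((-1:ℝ))^k * c) • xPow (K - J)) ∨ b K = 0) ∧
      (∃ c : ℝ, 0 < c ∧ b (J + Pi.single i0 k) = (((-1:ℝ))^k * c) • xPow (Pi.single i0 k)) := by
  induction k with
  | zero =>
    intro a
    refine ⟨fun K => if K = J then 1 else 0, ?_, ?_, ?_⟩
    · intro f
      rw [Finset.sum_eq_single J]
      · simp [pochE]
      · intro K _ hK; simp only [if_neg hK, zero_mul]
      · intro hJ
        exact absurd (mem_multiIdx.mpr (by omega)) hJ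
    · intro K hK
      by_cases h : K = J
      · subst h
        left
        refine ⟨le_refl _, 1, zero_le_one, ?_⟩
        simp [xPow, if_pos]
      · right; simp only [if_neg h]
    · refine ⟨1, zero_lt_one, ?_⟩
      simp [xPow]
  | succ k ih =>
    intro a
    obtain ⟨b, hb1, hb2, hb3⟩ := ih (a - 1)
    set w := mwt J with hw
    set G : (Fin N → ℕ) → MvPolynomial (Fin N) ℝ := fun K =>
      (if K ∈ multiIdx N (w + k) then (a:ℝ) • b K - Euler N (b K) else 0)
      - ∑ i : Fin N, (if 1 ≤ K i then (X i : MvPolynomial (Fin N) ℝ) * b (K - Pi.single i 1)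
          else 0) with hGdef
    have key : ∀ K', mwt K' = w + (k+1) → ∃ ci : Fin N → ℝ,
        (∀ i, 0 ≤ ci i) ∧ (∀ i, ci i ≠ 0 → J ≤ K') ∧
        G K' = (((-1:ℝ))^(k+1) * (∑ i, ci i)) • xPow (K' - J) ∧
        (K' = J + Pi.single i0 (k+1) → 0 < ci i0) := by
      intro K' hK'
      have hterm : ∀ i : Fin N, ∃ c : ℝ, 0 ≤ c ∧
          (if 1 ≤ K' i then (X i : MvPolynomial (Fin N) ℝ) * b (K' - Pi.single i 1) else 0)
            = (((-1:ℝ))^k * c) • xPow (K' - J) ∧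
          (c ≠ 0 → J ≤ K') ∧ (K' = J + Pi.single i0 (k+1) ∧ i = i0 → 0 < c) := by
        intro i
        by_cases hKi : 1 ≤ K' i
        · have hsle : Pi.single i 1 ≤ K' := by
            intro x
            rcases eq_or_ne x i with rfl | hx
            · simpa using hKi
            · simp [Pi.single_apply, hx]
          have hmK : mwt (K' - Pi.single i 1) = w + k := by
            rw [mwt_sub hsle, mwt_single]; omega
          by_cases hKeq : K' = J + Pi.single i0 (k+1) ∧ i = i0
          · obtain ⟨hK'eq, rfl⟩ := hKeq
            obtain ⟨c, hc, hbc⟩ := hb3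
            have hKJ : K' - Pi.single i 1 = J + Pi.single i k := by
              subst hK'eq
              funext x
              simp only [Pi.sub_apply, Pi.add_apply, Pi.single_apply]
              split <;> omega
            refine ⟨c, le_of_lt hc, ?_, fun _ => ?_, fun _ => hc⟩
            · rw [if_pos hKi, hKJ, hbc, mul_smul_comm, X_mul_xPow]
              congr 2
              subst hK'eq
              funext x
              simp only [Pi.add_apply, Pi.sub_apply, Pi.single_apply]
              split <;> omega
            · subst hK'eq
              intro x
              simp only [Pi.add_apply]
              omega
          · rcases hb2 (K' - Pi.single i 1) hmK with ⟨hJK, c, hc, hbK⟩ | hb0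
            · have hKle : K' - Pi.single i 1 ≤ K' := fun x => by
                simp only [Pi.sub_apply]; omega
              refine ⟨c, hc, ?_, fun _ => le_trans hJK hKle, fun h => absurd h hKeq⟩
              rw [if_pos hKi, hbK, mul_smul_comm, X_mul_xPow]
              congr 2
              funext x
              have h1 := hJK x
              rcases eq_or_ne x i with rfl | hx
              · simp only [Pi.sub_apply, Pi.single_apply, Pi.add_apply, if_pos rfl,
                  eq_self_iff_true, if_true] at h1 ⊢
                omega
              · simp only [Pi.sub_apply, Pi.single_apply, Pi.add_apply, if_neg hx] at h1 ⊢
                omega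
            · refine ⟨0, le_refl 0, ?_, by simp, fun h => absurd h hKeq⟩
              rw [if_pos hKi, hb0, mul_zero]
              simp
        · refine ⟨0, le_refl 0, ?_, by simp, ?_⟩
          · rw [if_neg hKi]; simp
          · rintro ⟨rfl, rfl⟩
            exfalso
            apply hKi
            simp only [Pi.add_apply, Pi.single_eq_same]
            omega
      choose ci h0 heq hz hp using hterm
      refine ⟨ci, h0, fun i hi => hz i hi, ?_, fun hK0 => hp i0 ⟨hK0, rfl⟩⟩
      have hnot : K' ∉ multiIdx N (w + k) := by rw [mem_multiIdx]; omega
      rw [hGdef]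
      simp only [if_neg hnot, zero_sub]
      rw [Finset.sum_congr rfl fun i _ => heq i, ← Finset.sum_smul, ← Finset.mul_sum, ← neg_smul]
      congr 1
      ring
    refine ⟨G, ?_, ?_, ?_⟩
    · intro f
      rw [hGdef]
      have hpoch : pochE N a (k+1) (DJ J f)
          = (a:ℝ) • (pochE N (a-1) k (DJ J f)) - Euler N (pochE N (a-1) k (DJ J f)) := by
        rw [pochE, LinearMap.comp_apply, LinearMap.sub_apply, LinearMap.smul_apply,
          LinearMap.id_apply]
      rw [hpoch, hb1 f]
      beta_reduce
      -- expand RHS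
      rw [Finset.sum_congr rfl fun K _ => sub_mul _ _ ((DJ K) f), Finset.sum_sub_distrib]
      -- first part
      have hfirst : ∑ K ∈ multiIdx N (w + (k+1)),
          (if K ∈ multiIdx N (w + k) then (a:ℝ) • b K - Euler N (b K) else 0) * DJ K f
          = ∑ K ∈ multiIdx N (w + k), ((a:ℝ) • b K - Euler N (b K)) * DJ K f := by
        simp only [ite_mul, zero_mul]
        rw [Finset.sum_ite_mem,
          Finset.inter_eq_right.mpr (multiIdx_mono (show w + k ≤ w + (k+1) by omega))]
      rw [hfirst]
      -- second part
      have hsec : ∑ K ∈ multiIdx N (w + (k+1)),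
          (∑ i : Fin N, (if 1 ≤ K i then (X i : MvPolynomial (Fin N) ℝ)
            * b (K - Pi.single i 1) else 0)) * DJ K f
          = ∑ i : Fin N, ∑ K ∈ multiIdx N (w + k),
              b K * ((X i : MvPolynomial (Fin N) ℝ) * DJ (K + Pi.single i 1) f) := by
        rw [Finset.sum_congr rfl (fun K _ => Finset.sum_mul _ _ _), Finset.sum_comm]
        refine Finset.sum_congr rfl fun i _ => ?_
        simp only [ite_mul, zero_mul]
        rw [← Finset.sum_filter]
        have himg : (multiIdx N (w + (k+1))).filter (fun K => 1 ≤ K i)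
            = (multiIdx N (w + k)).image (· + Pi.single i 1) := by
          ext K
          simp only [Finset.mem_filter, Finset.mem_image, mem_multiIdx]
          constructor
          · rintro ⟨h1, h2⟩
            refine ⟨K - Pi.single i 1, ?_, ?_⟩
            · rw [mwt_sub (by
                  intro x
                  rcases eq_or_ne x i with rfl | hx
                  · simpa using h2
                  · simp [Pi.single_apply, hx]), mwt_single]
              omega
            · funext x
              simp only [Pi.add_apply, Pi.sub_apply, Pi.single_apply]
              rcases eq_or_ne x i with rfl | hx
              · simp; omega
              · simp [hx]
          · rintro ⟨L, hL, rfl⟩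
            constructor
            · rw [mwt_add, mwt_single]; omega
            · simp
        rw [himg, Finset.sum_image (fun L _ L' _ h => by
          have := congrArg (· - Pi.single i 1) h
          simpa using this)]
        refine Finset.sum_congr rfl fun L _ => ?_
        have hLi : (L + Pi.single i 1) - Pi.single i 1 = L := by
          funext x; simp
        rw [hLi]
        ring
      rw [hsec]
      -- expand LHS
      rw [Finset.smul_sum, map_sum]
      rw [Finset.sum_congr rfl fun K _ => Euler_mul (b K) (DJ K f),
        Finset.sum_add_distrib]
      rw [Finset.sum_congr rfl fun K _ => congrArg (b K * ·) (Euler_DJ K f)]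
      rw [Finset.sum_congr rfl fun K _ => Finset.mul_sum _ _ _, Finset.sum_comm]
      simp only [smul_mul_assoc, sub_mul]
      rw [Finset.sum_sub_distrib]
      abel
    · intro K hK
      obtain ⟨ci, h0, hJle, hGK, _⟩ := key K hK
      by_cases hc : ∑ i, ci i = 0
      · right; rw [hGK, hc, mul_zero, zero_smul]
      · left
        have hex : ∃ i, ci i ≠ 0 := by
          by_contra hno
          push_neg at hno
          exact hc (Finset.sum_eq_zero fun i _ => hno i)
        obtain ⟨i, hi⟩ := hex
        exact ⟨hJle i hi, ∑ i, ci i, Finset.sum_nonneg (fun i _ => h0 i), hGK⟩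
    · have hK0 : mwt (J + Pi.single i0 (k+1)) = w + (k+1) := by rw [mwt_add, mwt_single]
      obtain ⟨ci, h0, hJle, hGK, hpos⟩ := key _ hK0
      refine ⟨∑ i, ci i, ?_, ?_⟩
      · have h1 := hpos rfl
        have hle : ci i0 ≤ ∑ i, ci i :=
          Finset.single_le_sum (fun i _ => h0 i) (Finset.mem_univ i0)
        linarith
      · rw [hGK]
        congr 2
        funext x
        simp only [Pi.sub_apply, Pi.add_apply]
        omega


lemma swt_eq_sum (f : Fin N →₀ ℕ) : (f.sum fun _ => id) = swt f := by
  rw [Finsupp.sum_fintype]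
  · rfl
  · intro i; rfl

noncomputable def symEquiv (A : ℕ) : {I : Fin N → ℕ // mwt I = A} ≃ Sym (Fin N) A where
  toFun := fun p => ⟨Finsupp.toMultiset (toF p.1), by
    rw [Finsupp.card_toMultiset, swt_eq_sum, swt_toF, p.2]⟩
  invFun := fun m => ⟨fun i => m.1.count i, by
    have h1 : mwt (fun i => m.1.count i) = (Multiset.toFinsupp m.1).sum fun _ => id := by
      rw [swt_eq_sum]
      rfl
    rw [h1, ← Finsupp.card_toMultiset, Multiset.toFinsupp_toMultiset, m.2]⟩
  left_inv := fun p => by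
    ext i
    simp [Finsupp.count_toMultiset]
  right_inv := fun m => by
    refine Subtype.ext ?_
    refine Multiset.ext.mpr fun a => ?_
    rw [Finsupp.count_toMultiset]
    rfl


lemma sum_eq_swt (f : Fin N →₀ ℕ) : (f.sum fun _ e => e) = swt f := by
  rw [Finsupp.sum_fintype]
  · rfl
  · intro i; rfl

lemma degree_eq_swt (f : Fin N →₀ ℕ) : f.degree = swt f := by
  rw [Finsupp.degree, swt]
  exact Finset.sum_subset (Finset.subset_univ _) fun i _ hi => by
    simpa using Finsupp.notMem_support_iff.mp hi

lemma swt_add (s t : Fin N →₀ ℕ) : swt (s + t) = swt s + swt t := by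
  simp [swt, Finset.sum_add_distrib]

lemma eq_of_le_of_mwt_eq {J K : Fin N → ℕ} (h : J ≤ K) (hm : mwt J = mwt K) : J = K := by
  funext i
  by_contra hne
  have hlt : J i < K i := lt_of_le_of_ne (h i) hne
  have : mwt J < mwt K :=
    Finset.sum_lt_sum (fun x _ => h x) ⟨i, Finset.mem_univ i, hlt⟩
  omega

lemma toF_le_iff {J : Fin N → ℕ} {s : Fin N →₀ ℕ} : toF J ≤ s ↔ ∀ i, J i ≤ s i := by
  rw [Finsupp.le_def]; rfl

noncomputable instance fintypeSub (A : ℕ) : Fintype {I : Fin N → ℕ // mwt I = A} :=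
  Fintype.ofEquiv _ (symEquiv A).symm

lemma card_sub (A : ℕ) :
    Fintype.card {I : Fin N → ℕ // mwt I = A} = (N + A - 1).choose A := by
  rw [Fintype.card_congr (symEquiv A), Sym.card_sym_eq_multichoose, Fintype.card_fin,
    Nat.multichoose_eq]

def idxEquiv (A B : ℕ) :
    {q : (Fin N → ℕ) × (Fin N → ℕ) // mwt q.1 = A ∧ mwt q.2 = B}
      ≃ {I : Fin N → ℕ // mwt I = A} × {J : Fin N → ℕ // mwt J = B} where
  toFun := fun p => (⟨p.1.1, p.2.1⟩, ⟨p.1.2, p.2.2⟩)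
  invFun := fun q => ⟨(q.1.1, q.2.1), q.1.2, q.2.2⟩
  left_inv := fun p => rfl
  right_inv := fun q => rfl

noncomputable instance fintypeIdx (A B : ℕ) :
    Fintype {q : (Fin N → ℕ) × (Fin N → ℕ) // mwt q.1 = A ∧ mwt q.2 = B} :=
  Fintype.ofEquiv _ (idxEquiv A B).symm

lemma card_idx (A B : ℕ) :
    Fintype.card {q : (Fin N → ℕ) × (Fin N → ℕ) // mwt q.1 = A ∧ mwt q.2 = B}
      = (N + A - 1).choose A * (N + B - 1).choose B := by
  rw [Fintype.card_congr (idxEquiv A B), Fintype.card_prod, card_sub, card_sub]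

end Stmt10

open Stmt10

set_option maxHeartbeats 1000000 in
/-- For `0 ≤ m ≤ r ≤ n`, `−m ≤ d ≤ r−m`, `k = d+m`, the family
`B_{I,J}` with `|I| = r−m`, `|J| = r−d−m` is linearly independent; each member has order
`r`, maps each monomial `x^K` into the span of monomials of total degree `|K|+d`, and maps
`P_n^N` into `P_{n−m}^N` but not into `P_{n−m−1}^N`; and the span of the family has
dimension `C(N+r−m−1, r−m)·C(N+r−m−d−1, r−m−d)`. -/
theorem mv_basis_order_degree_deficiency (N n r m : ℕ) (d : ℤ) (hN : 1 ≤ N)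
    (hmr : m ≤ r) (hrn : r ≤ n) (hd1 : -(m : ℤ) ≤ d) (hd2 : d ≤ (r : ℤ) - m) :
    LinearIndependent ℝ
      (fun p : { q : (Fin N → ℕ) × (Fin N → ℕ) //
          mwt q.1 = r - m ∧ mwt q.2 = ((r : ℤ) - d - m).toNat } =>
        Bop N n ((d + m).toNat) p.1.1 p.1.2) ∧
    (∀ I J : Fin N → ℕ, mwt I = r - m → mwt J = ((r : ℤ) - d - m).toNat →
      ((∃ a : (Fin N → ℕ) → MvPolynomial (Fin N) ℝ,
        (∀ f : MvPolynomial (Fin N) ℝ,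
          Bop N n ((d + m).toNat) I J f = ∑ K ∈ multiIdx N r, a K * DJ K f) ∧
        ∃ K ∈ multiIdx N r, mwt K = r ∧ a K ≠ 0) ∧
      (∀ K : Fin N → ℕ,
        MvPolynomial.IsHomogeneous (Bop N n ((d + m).toNat) I J (xPow K))
          (((mwt K : ℤ) + d).toNat)) ∧
      (∀ f : MvPolynomial (Fin N) ℝ, f.totalDegree ≤ n →
        (Bop N n ((d + m).toNat) I J f).totalDegree ≤ n - m) ∧
      (∃ f : MvPolynomial (Fin N) ℝ, f.totalDegree ≤ n ∧
        Bop N n ((d + m).toNat) I J f ≠ 0 ∧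
        (Bop N n ((d + m).toNat) I J f).totalDegree = n - m))) ∧
    Module.finrank ℝ
      (Submodule.span ℝ (Set.range
        (fun p : { q : (Fin N → ℕ) × (Fin N → ℕ) //
            mwt q.1 = r - m ∧ mwt q.2 = ((r : ℤ) - d - m).toNat } =>
          Bop N n ((d + m).toNat) p.1.1 p.1.2)))
      = (N + (r - m) - 1).choose (r - m) *
        (N + ((r : ℤ) - d - m).toNat - 1).choose (((r : ℤ) - d - m).toNat) := by
  have hBz : ((((r : ℤ) - d - m).toNat : ℤ)) = (r : ℤ) - d - m := Int.toNat_of_nonneg (by omega)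
  have hkz : (((d + m).toNat : ℤ)) = d + m := Int.toNat_of_nonneg (by omega)
  set k' := (d + m).toNat with hk'
  set B := ((r : ℤ) - d - m).toNat with hB
  have hBk : B + k' = r := by omega
  have hrm : ((r - m : ℕ) : ℤ) = (r : ℤ) - m := by omega
  -- Part 1 : linear independence
  have part1 : LinearIndependent ℝ
      (fun p : { q : (Fin N → ℕ) × (Fin N → ℕ) //
          mwt q.1 = r - m ∧ mwt q.2 = B } => Bop N n k' p.1.1 p.1.2) := by
    rw [linearIndependent_iff']
    intro s g hsum p0 hp0
    have happ := congrArg (fun (L : MvPolynomial (Fin N) ℝ →ₗ[ℝ] MvPolynomial (Fin N) ℝ) =>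
        coeff (toF p0.1.1) (L (monomial (toF p0.1.2) 1))) hsum
    simp only [LinearMap.sum_apply, LinearMap.smul_apply, LinearMap.zero_apply,
      MvPolynomial.coeff_sum, coeff_smul, coeff_zero, smul_eq_mul] at happ
    rw [Finset.sum_eq_single p0] at happ
    · rw [Bop_monomial_le _ _ _ _ _ _ le_rfl, tsub_self, add_zero, coeff_monomial,
        if_pos rfl, one_mul] at happ
      have hC : (∏ i, (((p0.1.2 i).descFactorial (p0.1.2 i)) : ℝ)) *
          (∏ t ∈ Finset.range k', ((n : ℝ) - t - swt (toF p0.1.2))) ≠ 0 := by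
        apply mul_ne_zero
        · rw [Finset.prod_ne_zero_iff]
          intro i _
          have := Nat.descFactorial_self (p0.1.2 i) ▸ (p0.1.2 i).factorial_pos
          positivity
        · rw [Finset.prod_ne_zero_iff]
          intro t ht
          rw [swt_toF, p0.2.2]
          have htk : (t : ℤ) < k' := by exact_mod_cast Finset.mem_range.mp ht
          have hz : (0 : ℤ) < (n : ℤ) - t - B := by omega
          have : ((n : ℝ) - t - B) = (((n : ℤ) - t - B : ℤ) : ℝ) := by push_cast; ring
          rw [this]
          exact ne_of_gt (by exact_mod_cast hz)
      rcases mul_eq_zero.mp happ with h | h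
      · exact h
      · exact absurd h hC
    · intro p hp hne
      have hJm : mwt p.1.2 = mwt p0.1.2 := by rw [p.2.2, p0.2.2]
      by_cases hJ : p.1.2 = p0.1.2
      · have hI : p.1.1 ≠ p0.1.1 := fun hII =>
          hne (Subtype.ext (Prod.ext hII hJ))
        rw [hJ, Bop_monomial_le _ _ _ _ _ _ le_rfl, tsub_self, add_zero, coeff_monomial,
          if_neg (fun hc => hI (toF_injective hc)), mul_zero]
      · have hnle : ¬ toF p.1.2 ≤ toF p0.1.2 := fun hle =>
          hJ (eq_of_le_of_mwt_eq (fun i => toF_le_iff.mp hle i) hJm)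
        rw [Bop_monomial_not_le _ _ _ _ _ _ hnle]
        simp
    · intro h
      exact absurd hp0 h
  refine ⟨part1, ?_, ?_⟩
  · intro I J hI hJ
    have i0 : Fin N := ⟨0, by omega⟩
    have hJB : mwt J = B := hJ
    refine ⟨?_, ?_, ?_, ?_⟩
    -- (a) representation with top-order coefficient
    · obtain ⟨b, hb1, hb2, hb3⟩ := rep i0 J k' ((n : ℤ) - mwt J)
      have hr' : mwt J + k' = r := by omega
      refine ⟨fun K => xPow I * b K, ?_, ?_⟩
      · intro f
        rw [Bop_apply, hb1 f, hr', Finset.mul_sum]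
        exact Finset.sum_congr rfl fun K _ => by rw [mul_assoc]
      · obtain ⟨c, hc, hbc⟩ := hb3
        refine ⟨J + Pi.single i0 k', ?_, ?_, ?_⟩
        · exact mem_multiIdx.mpr (by rw [mwt_add, mwt_single]; omega)
        · rw [mwt_add, mwt_single]; omega
        · beta_reduce
          rw [hbc, smul_eq_C_mul]
          refine mul_ne_zero (xPow_ne_zero I) (mul_ne_zero ?_ (xPow_ne_zero _))
          rw [Ne, MvPolynomial.C_eq_zero]
          exact mul_ne_zero (pow_ne_zero _ (by norm_num)) (ne_of_gt hc)
    -- (b) homogeneity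
    · intro K
      rw [xPow_eq_monomial]
      by_cases hle : toF J ≤ toF K
      · rw [Bop_monomial_le _ _ _ _ _ _ hle]
        apply isHomogeneous_monomial
        rw [degree_eq_swt, swt_add, swt_toF, swt_sub hle, swt_toF, hI, hJB]
        have hm1 : mwt J ≤ mwt K := by
          have := mwt_le_swt hle
          rwa [swt_toF] at this
        rw [hJB] at hm1
        omega
      · rw [Bop_monomial_not_le _ _ _ _ _ _ hle]
        exact isHomogeneous_zero _ _ _
    -- (c) degree bound
    · intro f hf
      conv_lhs => rw [f.as_sum]
      rw [map_sum]
      refine le_trans (totalDegree_finset_sum _ _) (Finset.sup_le fun v hv => ?_)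
      have hvn : swt v ≤ n := by
        have := le_totalDegree hv
        rw [sum_eq_swt] at this
        omega
      by_cases hle : toF J ≤ v
      · have hm1 : mwt J ≤ swt v := mwt_le_swt hle
        by_cases hbig : swt v + k' ≤ n
        · rw [Bop_monomial_le _ _ _ _ _ _ hle]
          refine le_trans (totalDegree_monomial_le _ _) ?_
          rw [swt_eq_sum, swt_add, swt_toF, swt_sub hle, hI]
          rw [hJB] at hm1
          omega
        · rw [Bop_monomial_le _ _ _ _ _ _ hle]
          have hz : ((n : ℝ) - ((n - swt v : ℕ) : ℕ) - swt v) = 0 := by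
            push_cast [Nat.cast_sub hvn]
            ring
          rw [Finset.prod_eq_zero (Finset.mem_range.mpr (show n - swt v < k' by omega)) hz,
            mul_zero, monomial_zero]
          simp
      · rw [Bop_monomial_not_le _ _ _ _ _ _ hle]
        simp
    -- (d) attainment
    · set K : Fin N → ℕ := J + Pi.single i0 (n - r) with hK
      have hJKle : toF J ≤ toF K := toF_le_iff.mpr fun i => by
        simp only [hK, toF_apply, Pi.add_apply]; omega
      have hmwtK : mwt K = B + (n - r) := by rw [hK, mwt_add, mwt_single, hJB]
      have hcoeff : ((1:ℝ) * (∏ i, (((toF K) i).descFactorial (J i) : ℝ)) *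
          ∏ t ∈ Finset.range k', ((n : ℝ) - t - swt (toF K))) ≠ 0 := by
        rw [one_mul]
        apply mul_ne_zero
        · rw [Finset.prod_ne_zero_iff]
          intro i _
          have hp : (K i).descFactorial (J i) ≠ 0 := by
            rw [Ne, Nat.descFactorial_eq_zero_iff_lt]
            simp only [hK, Pi.add_apply]
            omega
          exact Nat.cast_ne_zero.mpr hp
        · rw [Finset.prod_ne_zero_iff]
          intro t ht
          rw [swt_toF, hmwtK]
          have htk : (t : ℤ) < k' := by exact_mod_cast Finset.mem_range.mp ht
          have hz : (0 : ℤ) < (n : ℤ) - t - ((B + (n - r) : ℕ) : ℤ) := by omega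
          have hcast : ((n : ℝ) - t - ((B + (n - r) : ℕ) : ℕ))
              = (((n : ℤ) - t - ((B + (n - r) : ℕ) : ℤ) : ℤ) : ℝ) := by push_cast; ring
          rw [hcast]
          exact ne_of_gt (by exact_mod_cast hz)
      refine ⟨xPow K, ?_, ?_, ?_⟩
      · rw [xPow_eq_monomial]
        refine le_trans (totalDegree_monomial_le _ _) ?_
        rw [swt_eq_sum, swt_toF, hmwtK]
        omega
      · rw [xPow_eq_monomial, Bop_monomial_le _ _ _ _ _ _ hJKle, Ne, monomial_eq_zero]
        exact hcoeff
      · rw [xPow_eq_monomial, Bop_monomial_le _ _ _ _ _ _ hJKle, totalDegree_monomial _ hcoeff,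
          sum_eq_swt, swt_add, swt_toF, swt_sub hJKle, swt_toF, hI, hmwtK, hJB]
        omega
  · have hfr := finrank_span_eq_card part1
    rw [hfr, card_idx]
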